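/- Let ν be a finite complex measure on [0,1], let T = {f_1,...,f_k} with pairwise disjoint neighborhoods N_j ⊆ [0,1] containing f_j, and let F = [0,1] \ ∪_j N_j. For any trigonometric polynomial X of degree at most m, |∫_0^1 X(f) ν(df)| ≤ ‖X‖_∞ ( ∫_F |ν|(df) + Σ_j |∫_{N_j} ν(df)| + Σ_j (2πm)|∫_{N_j}(f−f_j)ν(df)| + Σ_j ((2πm)^2/2)∫_{N_j}(f−f_j)^2 |ν|(df) ). -/

import Mathlib

/-!
Split `∫ X dν` over `F` and the `N j`. On `F` use `|X| ≤ ‖X‖_∞`. On `N j` expand `X` to second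
order about `f j`: the constant and linear terms give `X (f j) ∫_{N j} dν` and
`X' (f j) ∫_{N j} (f - f j) dν`, and the remainder is at most `sup |X''| (f - f j)² / 2`.
Bernstein's inequality `‖T'‖_∞ ≤ 2πm ‖T‖_∞`, applied to `X` and to `X'`, bounds `|X' (f j)|` and
`sup |X''|` by `2πm ‖X‖_∞` and `(2πm)² ‖X‖_∞`.

Bernstein's inequality follows from M. Riesz's interpolation formula
`T' t = ∑ l < 2m, c l * T (t + δ l)` with `δ l = (2l+1)/(4m)` and
`c l = (2πi/m) ω_l^(m+1) / (ω_l - 1)²`, where `ω_l = exp (2πi δ l)` runs over the roots of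
`ω^(2m) = -1`. Both the formula and `∑ |c l| = 2πm` reduce to the power sums
`∑ l, ω_l^(j+1) / (ω_l - 1)² = (j - m) m` for `0 ≤ j ≤ 2m`, which telescope because
`∑ l, ω_l^j = 0` for `0 < j < 2m`.
-/

open Complex MeasureTheory
open scoped Real

section RootSums

open Finset

variable {K ι : Type*} [Field K] {s : Finset ι} {ω : ι → K} {m : ℕ}

lemma ne_one_of_pow_eq_neg_one [NeZero (2 : K)] {z : K} {n : ℕ} (hz : z ^ n = -1) : z ≠ 1 := by
  rintro rfl
  rw [one_pow, eq_neg_iff_add_eq_zero, one_add_one_eq_two] at hz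
  exact two_ne_zero hz

variable (hroot : ∀ i ∈ s, ω i ^ (2 * m) = -1)
include hroot

lemma sum_pow_two_mul_add_one_mul_eq_neg (f : K → K) :
    ∑ i ∈ s, ω i ^ (2 * m + 1) * f (ω i) = -∑ i ∈ s, ω i * f (ω i) := by
  rw [← sum_neg_distrib]
  refine sum_congr rfl fun i hi => ?_
  rw [pow_succ, hroot i hi]
  ring

variable [NeZero (2 : K)]

lemma sum_pow_succ_div_sub_one (j : ℕ) :
    ∑ i ∈ s, ω i ^ (j + 1) / (ω i - 1) = ∑ i ∈ s, ω i ^ j / (ω i - 1) + ∑ i ∈ s, ω i ^ j := by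
  rw [← sum_add_distrib]
  refine sum_congr rfl fun i hi => ?_
  have := sub_ne_zero.2 (ne_one_of_pow_eq_neg_one (hroot i hi))
  field_simp
  ring

lemma sum_pow_succ_div_sub_one_sq (j : ℕ) :
    ∑ i ∈ s, ω i ^ (j + 1) / (ω i - 1) ^ 2
      = ∑ i ∈ s, ω i ^ j / (ω i - 1) ^ 2 + ∑ i ∈ s, ω i ^ j / (ω i - 1) := by
  rw [← sum_add_distrib]
  refine sum_congr rfl fun i hi => ?_
  have := sub_ne_zero.2 (ne_one_of_pow_eq_neg_one (hroot i hi))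
  field_simp
  ring

variable (hpow : ∀ j, 0 < j → j < 2 * m → ∑ i ∈ s, ω i ^ j = 0)
include hpow

lemma sum_pow_div_sub_one_eq_sum_div_sub_one {j : ℕ} (hj : 0 < j) (hj' : j ≤ 2 * m) :
    ∑ i ∈ s, ω i ^ j / (ω i - 1) = ∑ i ∈ s, ω i / (ω i - 1) := by
  induction j, hj using Nat.le_induction with
  | base => simp
  | succ j hj ih =>
    rw [sum_pow_succ_div_sub_one hroot, ih (by omega), hpow j hj (by omega), add_zero]

theorem two_mul_sum_pow_div_sub_one {j : ℕ} (hj : 0 < j) (hj' : j ≤ 2 * m) :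
    2 * ∑ i ∈ s, ω i ^ j / (ω i - 1) = #s := by
  have hlast := sum_pow_succ_div_sub_one hroot (2 * m)
  rw [sum_pow_div_sub_one_eq_sum_div_sub_one hroot hpow (by omega) le_rfl,
    sum_congr rfl hroot, sum_const, nsmul_eq_mul, mul_neg_one] at hlast
  -- Telescoping to `j = 2m + 1` subtracts `#s`, while `ω ^ (2m+1) = -ω` flips the sign.
  have hflip := sum_pow_two_mul_add_one_mul_eq_neg hroot (fun z => 1 / (z - 1))
  simp only [mul_one_div] at hflip
  rw [sum_pow_div_sub_one_eq_sum_div_sub_one hroot hpow hj hj']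
  linear_combination hflip - hlast

theorem two_mul_sum_pow_succ_div_sub_one_sq {j : ℕ} (hj : j ≤ 2 * m) :
    2 * ∑ i ∈ s, ω i ^ (j + 1) / (ω i - 1) ^ 2 = ((j : K) - m) * #s := by
  have hup : ∀ j ≤ 2 * m, 2 * ∑ i ∈ s, ω i ^ (j + 1) / (ω i - 1) ^ 2
      = 2 * ∑ i ∈ s, ω i / (ω i - 1) ^ 2 + (j : K) * #s := by
    intro j hj
    induction j with
    | zero => simp
    | succ j ih =>
      rw [sum_pow_succ_div_sub_one_sq hroot, mul_add,
        two_mul_sum_pow_div_sub_one hroot hpow (by omega) hj, ih (by omega)]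
      push_cast
      ring
  have hflip := sum_pow_two_mul_add_one_mul_eq_neg hroot (fun z => 1 / (z - 1) ^ 2)
  simp only [mul_one_div] at hflip
  have hfirst : 2 * ∑ i ∈ s, ω i / (ω i - 1) ^ 2 = -((m : K) * #s) := by
    have := hup (2 * m) le_rfl
    rw [hflip] at this
    push_cast at this
    apply mul_left_cancel₀ (two_ne_zero : (2 : K) ≠ 0)
    linear_combination -this
  rw [hup j hj, hfirst]
  ring

end RootSums

noncomputable section RieszNodes

def rieszNode (m l : ℕ) : ℝ := (2 * l + 1) / (4 * m)

def rieszRoot (m l : ℕ) : ℂ := exp (2 * π * I * rieszNode m l)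

def rieszCoeff (m l : ℕ) : ℂ :=
  2 * π * I / m * (rieszRoot m l ^ (m + 1) / (rieszRoot m l - 1) ^ 2)

variable {m : ℕ}

lemma norm_rieszRoot (l : ℕ) : ‖rieszRoot m l‖ = 1 := by
  rw [rieszRoot,
    show 2 * π * I * rieszNode m l = (2 * π * rieszNode m l : ℝ) * I by push_cast; ring]
  exact norm_exp_ofReal_mul_I _

lemma rieszRoot_eq_mul_pow (hm : m ≠ 0) (l : ℕ) :
    rieszRoot m l = exp (2 * π * I / (4 * m)) * exp (2 * π * I / (2 * m : ℕ)) ^ l := by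
  rw [rieszRoot, ← exp_nat_mul, ← exp_add, rieszNode]
  congr 1
  have : (m : ℂ) ≠ 0 := by exact_mod_cast hm
  push_cast
  field_simp
  ring

lemma rieszRoot_pow_two_mul (hm : m ≠ 0) (l : ℕ) : rieszRoot m l ^ (2 * m) = -1 := by
  have hρ := isPrimitiveRoot_exp (2 * m) (by omega)
  rw [rieszRoot_eq_mul_pow hm, mul_pow, pow_right_comm, hρ.pow_eq_one, one_pow, mul_one,
    ← exp_nat_mul]
  have : (m : ℂ) ≠ 0 := by exact_mod_cast hm
  rw [show ((2 * m : ℕ) : ℂ) * (2 * π * I / (4 * m)) = π * I by push_cast; field_simp; ring,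
    exp_pi_mul_I]

lemma sum_rieszRoot_pow (hm : m ≠ 0) {j : ℕ} (hj : 0 < j) (hj' : j < 2 * m) :
    ∑ l ∈ Finset.range (2 * m), rieszRoot m l ^ j = 0 := by
  have hρ := isPrimitiveRoot_exp (2 * m) (by omega)
  simp_rw [rieszRoot_eq_mul_pow hm, mul_pow, ← Finset.mul_sum, ← pow_mul, mul_comm _ j, pow_mul]
  rw [geom_sum_eq (hρ.pow_ne_one_of_pos_of_lt hj.ne' hj'), pow_right_comm, hρ.pow_eq_one, one_pow,
    sub_self, zero_div, mul_zero]

lemma ofReal_norm_sub_one_sq {ω : ℂ} (hω : ‖ω‖ = 1) :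
    (‖ω - 1‖ : ℂ) ^ 2 = -(ω - 1) ^ 2 / ω := by
  have hω0 : ω ≠ 0 := norm_ne_zero_iff.1 (by rw [hω]; exact one_ne_zero)
  rw [← mul_conj', map_sub, map_one, ← inv_eq_conj hω]
  field_simp
  ring

lemma two_mul_sum_rieszRoot_pow_succ_div_sub_one_sq (hm : m ≠ 0) {j : ℕ} (hj : j ≤ 2 * m) :
    2 * ∑ l ∈ Finset.range (2 * m), rieszRoot m l ^ (j + 1) / (rieszRoot m l - 1) ^ 2
      = ((j : ℂ) - m) * (2 * m) := by
  rw [two_mul_sum_pow_succ_div_sub_one_sq (fun l _ => rieszRoot_pow_two_mul hm l)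
    (fun _ hj hj' => sum_rieszRoot_pow hm hj hj') hj, Finset.card_range]
  push_cast
  ring

lemma sum_rieszCoeff_mul_pow (hm : m ≠ 0) {j : ℕ} (hj : j ≤ 2 * m) :
    ∑ l ∈ Finset.range (2 * m), rieszCoeff m l * (rieszRoot m l ^ j / rieszRoot m l ^ m)
      = 2 * π * I * ((j : ℂ) - m) := by
  have hterm : ∀ l, rieszCoeff m l * (rieszRoot m l ^ j / rieszRoot m l ^ m)
      = 2 * π * I / m * (rieszRoot m l ^ (j + 1) / (rieszRoot m l - 1) ^ 2) := by
    intro l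
    have : rieszRoot m l ≠ 0 := exp_ne_zero _
    rw [rieszCoeff]
    field_simp
    ring
  have hS := two_mul_sum_rieszRoot_pow_succ_div_sub_one_sq hm hj
  have : (m : ℂ) ≠ 0 := by exact_mod_cast hm
  rw [Finset.sum_congr rfl fun l _ => hterm l, ← Finset.mul_sum,
    show ∑ l ∈ Finset.range (2 * m), _ = ((j : ℂ) - m) * m by linear_combination hS / 2]
  field_simp

lemma norm_rieszCoeff (l : ℕ) : ‖rieszCoeff m l‖ = 2 * π / m / ‖rieszRoot m l - 1‖ ^ 2 := by
  simp [rieszCoeff, norm_rieszRoot, abs_of_pos Real.pi_pos, div_eq_mul_inv]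

lemma sum_norm_rieszCoeff (hm : m ≠ 0) :
    ∑ l ∈ Finset.range (2 * m), ‖rieszCoeff m l‖ = 2 * π * m := by
  -- On the unit circle `‖ω - 1‖² = -(ω - 1)² / ω`, so this is the power sum with `j = 0`.
  have hterm : ∀ l, (‖rieszCoeff m l‖ : ℂ)
      = -(2 * π / m) * (rieszRoot m l ^ (0 + 1) / (rieszRoot m l - 1) ^ 2) := by
    intro l
    have : rieszRoot m l ≠ 0 := exp_ne_zero _
    have : rieszRoot m l - 1 ≠ 0 :=
      sub_ne_zero.2 (ne_one_of_pow_eq_neg_one (rieszRoot_pow_two_mul hm l))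
    push_cast [norm_rieszCoeff, ofReal_norm_sub_one_sq (norm_rieszRoot l)]
    field_simp
  have hS := two_mul_sum_rieszRoot_pow_succ_div_sub_one_sq hm (Nat.zero_le _)
  have : (m : ℂ) ≠ 0 := by exact_mod_cast hm
  apply ofReal_injective
  push_cast
  rw [Finset.sum_congr rfl fun l _ => hterm l, ← Finset.mul_sum,
    show ∑ l ∈ Finset.range (2 * m), _ = -(m : ℂ) * m by linear_combination hS / 2]
  field_simp

end RieszNodes

section Taylor

variable {E : Type*} [NormedAddCommGroup E] [NormedSpace ℝ E] {φ φ' : ℝ → E} {a B : ℝ}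

lemma norm_le_of_norm_deriv_le_mul_sub_of_le (hφ : ∀ t, HasDerivAt φ (φ' t) t) (ha : φ a = 0)
    (hbound : ∀ t, a ≤ t → ‖φ' t‖ ≤ B * (t - a)) {b : ℝ} (hab : a ≤ b) :
    ‖φ b‖ ≤ B * (b - a) ^ 2 / 2 := by
  have hB : ∀ t, HasDerivAt (fun t => B * (t - a) ^ 2 / 2) (B * (t - a)) t := fun t =>
    ((((hasDerivAt_id t).sub_const a).pow 2).const_mul B |>.div_const 2).congr_deriv (by simp; ring)
  refine image_norm_le_of_norm_deriv_right_le_deriv_boundary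
    (fun t _ => (hφ t).continuousAt.continuousWithinAt) (fun t _ => (hφ t).hasDerivWithinAt)
    (by simp [ha]) hB (fun t ht => hbound t ht.1) ⟨hab, le_rfl⟩

lemma norm_le_of_norm_deriv_le_mul_abs_sub (hφ : ∀ t, HasDerivAt φ (φ' t) t) (ha : φ a = 0)
    (hbound : ∀ t, ‖φ' t‖ ≤ B * |t - a|) (b : ℝ) : ‖φ b‖ ≤ B * (b - a) ^ 2 / 2 := by
  rcases le_total a b with hab | hba
  · exact norm_le_of_norm_deriv_le_mul_sub_of_le hφ ha
      (fun t ht => by simpa [abs_of_nonneg (sub_nonneg.2 ht)] using hbound t) hab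
  · have hψ : ∀ t, HasDerivAt (fun s => φ (-s)) (-φ' (-t)) t := fun t => by
      simpa [Function.comp_def] using (hφ (-t)).scomp t (hasDerivAt_neg t)
    have := norm_le_of_norm_deriv_le_mul_sub_of_le (a := -a) hψ (by simpa using ha)
      (fun t ht => by
        simpa [norm_neg, abs_of_nonpos (by linarith : -t - a ≤ 0), add_comm] using hbound (-t))
      (neg_le_neg hba)
    rwa [neg_neg, show (-b - -a) ^ 2 = (b - a) ^ 2 by ring] at this

theorem norm_sub_sub_smul_deriv_le {g g' g'' : ℝ → E} (hg : ∀ t, HasDerivAt g (g' t) t)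
    (hg' : ∀ t, HasDerivAt g' (g'' t) t) (hB : ∀ t, ‖g'' t‖ ≤ B) (a b : ℝ) :
    ‖g b - g a - (b - a) • g' a‖ ≤ B * (b - a) ^ 2 / 2 := by
  refine norm_le_of_norm_deriv_le_mul_abs_sub (φ := fun t => g t - g a - (t - a) • g' a)
    (φ' := fun t => g' t - g' a) (fun t => ?_) (by simp) (fun t => ?_) b
  · simpa using ((hg t).sub_const (g a)).fun_sub (((hasDerivAt_id t).sub_const a).smul_const (g' a))
  · simpa [Real.norm_eq_abs] using convex_univ.norm_image_sub_le_of_norm_hasDerivWithin_le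
      (fun s _ => (hg' s).hasDerivWithinAt) (fun s _ => hB s) (Set.mem_univ a) (Set.mem_univ t)

end Taylor

noncomputable section TrigPoly

def trigPoly (m : ℕ) (x : Fin (2 * m + 1) → ℂ) (t : ℝ) : ℂ :=
  ∑ j : Fin (2 * m + 1), x j * exp (2 * π * I * ((j : ℂ) - m) * t)

def derivCoeffs (m : ℕ) (x : Fin (2 * m + 1) → ℂ) (j : Fin (2 * m + 1)) : ℂ :=
  2 * π * I * ((j : ℂ) - m) * x j

variable {m : ℕ} (x : Fin (2 * m + 1) → ℂ)

lemma continuous_trigPoly : Continuous (trigPoly m x) := by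
  unfold trigPoly
  fun_prop

lemma hasDerivAt_trigPoly (t : ℝ) :
    HasDerivAt (trigPoly m x) (trigPoly m (derivCoeffs m x) t) t := by
  refine HasDerivAt.fun_sum fun j _ => ?_
  have hlin : HasDerivAt (fun s : ℝ => 2 * π * I * ((j : ℂ) - m) * s)
      (2 * π * I * ((j : ℂ) - m)) t := by
    simpa using (hasDerivAt_id t).ofReal_comp.const_mul (2 * π * I * ((j : ℂ) - m))
  exact (hlin.cexp.const_mul (x j)).congr_deriv (by rw [derivCoeffs]; ring)

lemma norm_trigPoly_le (t : ℝ) : ‖trigPoly m x t‖ ≤ ∑ j, ‖x j‖ := by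
  refine (norm_sum_le _ _).trans (Finset.sum_le_sum fun j _ => ?_)
  rw [norm_mul, show 2 * π * I * ((j : ℂ) - m) * t = (2 * π * ((j : ℝ) - m) * t : ℝ) * I by
    push_cast; ring, norm_exp_ofReal_mul_I, mul_one]

lemma bddAbove_range_norm_trigPoly : BddAbove (Set.range fun t => ‖trigPoly m x t‖) :=
  ⟨_, Set.forall_mem_range.2 (norm_trigPoly_le x)⟩

lemma trigPoly_add_rieszNode (t : ℝ) (l : ℕ) :
    trigPoly m x (t + rieszNode m l) = ∑ j : Fin (2 * m + 1), x j *
      exp (2 * π * I * ((j : ℂ) - m) * t) * (rieszRoot m l ^ (j : ℕ) / rieszRoot m l ^ m) := by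
  refine Finset.sum_congr rfl fun j _ => ?_
  rw [rieszRoot, ← exp_nat_mul, ← exp_nat_mul, ← exp_sub, mul_assoc (x j), ← exp_add]
  push_cast
  ring_nf

theorem trigPoly_derivCoeffs_eq_sum_rieszCoeff (hm : m ≠ 0) (t : ℝ) :
    trigPoly m (derivCoeffs m x) t
      = ∑ l ∈ Finset.range (2 * m), rieszCoeff m l * trigPoly m x (t + rieszNode m l) := by
  simp_rw [trigPoly_add_rieszNode, Finset.mul_sum]
  rw [Finset.sum_comm]
  refine Finset.sum_congr rfl fun j _ => ?_
  simp_rw [mul_left_comm (rieszCoeff m _), ← Finset.mul_sum]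
  rw [sum_rieszCoeff_mul_pow hm (by omega), derivCoeffs]
  ring

theorem norm_trigPoly_derivCoeffs_le {C : ℝ} (hC : ∀ t, ‖trigPoly m x t‖ ≤ C) (t : ℝ) :
    ‖trigPoly m (derivCoeffs m x) t‖ ≤ 2 * π * m * C := by
  rcases eq_or_ne m 0 with rfl | hm
  · simp [trigPoly, derivCoeffs]
  rw [trigPoly_derivCoeffs_eq_sum_rieszCoeff x hm, ← sum_norm_rieszCoeff hm, Finset.sum_mul]
  refine (norm_sum_le _ _).trans (Finset.sum_le_sum fun l _ => ?_)
  rw [norm_mul]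
  exact mul_le_mul_of_nonneg_left (hC _) (norm_nonneg _)

theorem norm_trigPoly_sub_sub_smul_le {C : ℝ} (hC : ∀ t, ‖trigPoly m x t‖ ≤ C) (a f : ℝ) :
    ‖trigPoly m x f - trigPoly m x a - (f - a) • trigPoly m (derivCoeffs m x) a‖
      ≤ (2 * π * m) ^ 2 * C / 2 * (f - a) ^ 2 :=
  (norm_sub_sub_smul_deriv_le (hasDerivAt_trigPoly x) (hasDerivAt_trigPoly _)
    (norm_trigPoly_derivCoeffs_le _ (norm_trigPoly_derivCoeffs_le x hC)) a f).trans_eq (by ring)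

end TrigPoly

section Integrals

variable {α : Type*} [MeasurableSpace α] {μ : Measure α}

lemma Continuous.integrable_of_ae_mem [TopologicalSpace α] [OpensMeasurableSpace α] [T2Space α]
    [IsFiniteMeasureOnCompacts μ] {E : Type*} [NormedAddCommGroup E] {K : Set α}
    (hK : IsCompact K) (hμ : ∀ᵐ x ∂μ, x ∈ K) {g : α → E} (hg : Continuous g) :
    Integrable g μ := by
  rw [← Measure.restrict_eq_self_of_ae_mem hμ]
  exact hg.continuousOn.integrableOn_compact hK

lemma Continuous.integrable_mul_of_ae_mem [TopologicalSpace α] [OpensMeasurableSpace α]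
    [T2Space α] [IsFiniteMeasureOnCompacts μ] {𝕜 : Type*} [NormedDivisionRing 𝕜] {K : Set α}
    (hK : IsCompact K) (hμ : ∀ᵐ x ∂μ, x ∈ K) {g h : α → 𝕜} (hg : Continuous g)
    (hmeas : AEStronglyMeasurable h μ) {c : ℝ} (hh : ∀ x, ‖h x‖ ≤ c) :
    Integrable (fun x => g x * h x) μ :=
  (hg.integrable_of_ae_mem hK hμ).mul_bdd hmeas (ae_of_all _ hh)

lemma integral_eq_setIntegral_diff_iUnion_add_sum {ι E : Type*} [Fintype ι]
    [NormedAddCommGroup E] [NormedSpace ℝ E] {S : Set α} (hS : ∀ᵐ x ∂μ, x ∈ S)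
    {N : ι → Set α} (hN : ∀ i, MeasurableSet (N i)) (hdisj : Pairwise (Function.onFun Disjoint N))
    {g : α → E} (hg : Integrable g μ) :
    ∫ x, g x ∂μ = ∫ x in S \ ⋃ i, N i, g x ∂μ + ∑ i, ∫ x in N i, g x ∂μ := by
  have hcover : ∀ᵐ x ∂μ, x ∈ (S \ ⋃ i, N i) ∪ ⋃ i, N i := by
    filter_upwards [hS] with x hx using Set.sdiff_union_self.symm ▸ Or.inl hx
  calc ∫ x, g x ∂μ = ∫ x in (S \ ⋃ i, N i) ∪ ⋃ i, N i, g x ∂μ := by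
        rw [Measure.restrict_eq_self_of_ae_mem hcover]
    _ = ∫ x in S \ ⋃ i, N i, g x ∂μ + ∫ x in ⋃ i, N i, g x ∂μ :=
        setIntegral_union Set.disjoint_sdiff_left (.iUnion hN) hg.integrableOn hg.integrableOn
    _ = _ := by rw [integral_iUnion hN hdisj hg.integrableOn, tsum_fintype]

end Integrals

theorem norm_integral_mul_le_of_taylor {μ : Measure ℝ} {X h : ℝ → ℂ} {a K : ℝ} {D : ℂ}
    (hT : ∀ f, ‖X f - X a - (f - a) • D‖ ≤ K * (f - a) ^ 2) (hh : ∀ f, ‖h f‖ ≤ 1)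
    (hXh : Integrable (fun f => X f * h f) μ) (hhi : Integrable h μ)
    (hlin : Integrable (fun f => ((f - a : ℝ) : ℂ) * h f) μ)
    (hsq : Integrable (fun f => (f - a) ^ 2) μ) :
    ‖∫ f, X f * h f ∂μ‖ ≤ ‖X a‖ * ‖∫ f, h f ∂μ‖ + ‖D‖ * ‖∫ f, ((f - a : ℝ) : ℂ) * h f ∂μ‖
      + K * ∫ f, (f - a) ^ 2 ∂μ := by
  have hrem : ∫ f, (X f - X a - (f - a) • D) * h f ∂μ
      = ∫ f, X f * h f ∂μ - X a * ∫ f, h f ∂μ - D * ∫ f, ((f - a : ℝ) : ℂ) * h f ∂μ := by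
    have : (fun f => (X f - X a - (f - a) • D) * h f)
        = fun f => X f * h f - X a * h f - D * (((f - a : ℝ) : ℂ) * h f) := by
      ext f
      rw [real_smul]
      ring
    rw [this, integral_sub (f := fun f => X f * h f - X a * h f) (hXh.sub (hhi.const_mul _))
      (hlin.const_mul _), integral_sub hXh (hhi.const_mul _), integral_const_mul,
      integral_const_mul]
  have hrem_le : ‖∫ f, (X f - X a - (f - a) • D) * h f ∂μ‖ ≤ K * ∫ f, (f - a) ^ 2 ∂μ := by
    rw [← integral_const_mul]
    refine norm_integral_le_of_norm_le (hsq.const_mul K) (ae_of_all _ fun f => ?_)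
    rw [norm_mul]
    exact (mul_le_of_le_one_right (norm_nonneg _) (hh f)).trans (hT f)
  calc ‖∫ f, X f * h f ∂μ‖
      = ‖X a * ∫ f, h f ∂μ + D * ∫ f, ((f - a : ℝ) : ℂ) * h f ∂μ
          + ∫ f, (X f - X a - (f - a) • D) * h f ∂μ‖ := by rw [hrem]; congr 1; ring
    _ ≤ _ := by
      refine (norm_add₃_le).trans (add_le_add (add_le_add ?_ ?_) hrem_le) <;> rw [norm_mul]

theorem norm_setIntegral_trigPoly_mul_le {m : ℕ} (x : Fin (2 * m + 1) → ℂ) {C : ℝ}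
    (hC : ∀ t, ‖trigPoly m x t‖ ≤ C) {μ : Measure ℝ} [IsFiniteMeasure μ] {K : Set ℝ}
    (hK : IsCompact K) (hμ : ∀ᵐ f ∂μ, f ∈ K) {h : ℝ → ℂ} (hmeas : Measurable h)
    (hh : ∀ f, ‖h f‖ ≤ 1) (s : Set ℝ) (a : ℝ) :
    ‖∫ f in s, trigPoly m x f * h f ∂μ‖ ≤ C * (‖∫ f in s, h f ∂μ‖
      + 2 * π * m * ‖∫ f in s, ((f - a : ℝ) : ℂ) * h f ∂μ‖
      + (2 * π * m) ^ 2 / 2 * ∫ f in s, (f - a) ^ 2 ∂μ) := by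
  have hmul {g : ℝ → ℂ} (hg : Continuous g) : IntegrableOn (fun f => g f * h f) s μ :=
    (hg.integrable_mul_of_ae_mem hK hμ hmeas.aestronglyMeasurable hh).integrableOn
  have hsq : IntegrableOn (fun f => (f - a) ^ 2) s μ :=
    ((continuous_sub_right a).pow 2 |>.integrable_of_ae_mem hK hμ).integrableOn
  have hint : IntegrableOn h s μ :=
    ((integrable_const 1).mono' hmeas.aestronglyMeasurable (ae_of_all _ hh)).integrableOn
  have hsq_nonneg : 0 ≤ ∫ f in s, (f - a) ^ 2 ∂μ := integral_nonneg fun f => sq_nonneg _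
  calc _ ≤ ‖trigPoly m x a‖ * ‖∫ f in s, h f ∂μ‖
          + ‖trigPoly m (derivCoeffs m x) a‖ * ‖∫ f in s, ((f - a : ℝ) : ℂ) * h f ∂μ‖
          + (2 * π * m) ^ 2 * C / 2 * ∫ f in s, (f - a) ^ 2 ∂μ :=
        norm_integral_mul_le_of_taylor (norm_trigPoly_sub_sub_smul_le x hC a) hh
          (hmul (continuous_trigPoly x)) hint (hmul (by fun_prop)) hsq
    _ ≤ C * ‖∫ f in s, h f ∂μ‖ + 2 * π * m * C * ‖∫ f in s, ((f - a : ℝ) : ℂ) * h f ∂μ‖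
          + (2 * π * m) ^ 2 * C / 2 * ∫ f in s, (f - a) ^ 2 ∂μ := by
        gcongr
        exacts [hC a, norm_trigPoly_derivCoeffs_le x hC a]
    _ = _ := by ring

theorem lemma_taylor_split_general (m k : ℕ) (x : Fin (2 * m + 1) → ℂ) (X : ℝ → ℂ)
    (hX : ∀ f : ℝ, X f = ∑ j : Fin (2 * m + 1), x j *
      Complex.exp (2 * Real.pi * Complex.I * ((j : ℂ) - (m : ℂ)) * f))
    (μ : Measure ℝ) [IsFiniteMeasure μ] (h : ℝ → ℂ) (hmeas : Measurable h)
    (hunit : ∀ f, ‖h f‖ = 1) (hsupp : μ (Set.Icc (0 : ℝ) 1)ᶜ = 0)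
    (fj : Fin k → ℝ) (N : Fin k → Set ℝ) (hNmeas : ∀ j, MeasurableSet (N j))
    (hdisj : Pairwise (Function.onFun Disjoint N))
    (F : Set ℝ) (hF : F = Set.Icc (0 : ℝ) 1 \ ⋃ j, N j) :
    ‖∫ f, X f * h f ∂μ‖ ≤ (⨆ g : ℝ, ‖X g‖) *
      ((μ F).toReal
        + ∑ j, ‖∫ f in N j, h f ∂μ‖
        + ∑ j, 2 * Real.pi * m * ‖∫ f in N j, ((f - fj j : ℝ) : ℂ) * h f ∂μ‖
        + ∑ j, (2 * Real.pi * m) ^ 2 / 2 * ∫ f in N j, (f - fj j) ^ 2 ∂μ) := by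
  obtain rfl : X = trigPoly m x := funext hX
  set C := ⨆ g : ℝ, ‖trigPoly m x g‖
  have hC : ∀ t, ‖trigPoly m x t‖ ≤ C := le_ciSup (bddAbove_range_norm_trigPoly x)
  have hμ : ∀ᵐ f ∂μ, f ∈ Set.Icc (0 : ℝ) 1 := ae_iff.2 hsupp
  have hh : ∀ f, ‖h f‖ ≤ 1 := fun f => (hunit f).le
  have hF' : ‖∫ f in F, trigPoly m x f * h f ∂μ‖ ≤ C * (μ F).toReal :=
    norm_setIntegral_le_of_norm_le_const (measure_lt_top μ F) fun f _ =>
      (norm_mul_le _ _).trans (mul_le_of_le_one_right (norm_nonneg _) (hh f) |>.trans (hC f))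
  rw [integral_eq_setIntegral_diff_iUnion_add_sum hμ hNmeas hdisj
    ((continuous_trigPoly x).integrable_mul_of_ae_mem isCompact_Icc hμ hmeas.aestronglyMeasurable
      hh), ← hF]
  calc _ ≤ ‖∫ f in F, trigPoly m x f * h f ∂μ‖ + ∑ j, ‖∫ f in N j, trigPoly m x f * h f ∂μ‖ :=
        (norm_add_le _ _).trans (add_le_add le_rfl (norm_sum_le _ _))
    _ ≤ _ := (add_le_add hF' (Finset.sum_le_sum fun j _ =>
          norm_setIntegral_trigPoly_mul_le x hC isCompact_Icc hμ hmeas hh (N j) (fj j))).trans_eq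
        (by simp only [← Finset.mul_sum, Finset.sum_add_distrib]; ring)

/-- Lemma 1 of the paper: for a finite complex measure `ν` on `[0,1]` (represented in polar
form `ν(df) = h(f) μ(df)` with `μ = |ν|` a finite measure and `|h| = 1`), and any trigonometric
polynomial `X` of degree at most `m`,
`|∫ X dν| ≤ ‖X‖_∞ (|ν|(F) + Σ_j |∫_{N_j} dν| + Σ_j 2πm |∫_{N_j}(f−f_j) dν|
   + Σ_j ((2πm)²/2) ∫_{N_j}(f−f_j)² d|ν|)`. -/
theorem lemma_taylor_split (m k : ℕ) (x : Fin (2 * m + 1) → ℂ) (X : ℝ → ℂ)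
    (hX : ∀ f : ℝ, X f = ∑ j : Fin (2 * m + 1), x j *
      Complex.exp (2 * Real.pi * Complex.I * ((j : ℂ) - (m : ℂ)) * f))
    (μ : Measure ℝ) [IsFiniteMeasure μ] (h : ℝ → ℂ) (hmeas : Measurable h)
    (hunit : ∀ f, ‖h f‖ = 1) (hsupp : μ (Set.Icc (0 : ℝ) 1)ᶜ = 0)
    (fj : Fin k → ℝ) (N : Fin k → Set ℝ) (hNmeas : ∀ j, MeasurableSet (N j))
    (hmem : ∀ j, fj j ∈ N j) (hsub : ∀ j, N j ⊆ Set.Icc (0 : ℝ) 1)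
    (hdisj : Pairwise (Function.onFun Disjoint N))
    (F : Set ℝ) (hF : F = Set.Icc (0 : ℝ) 1 \ ⋃ j, N j) :
    ‖∫ f, X f * h f ∂μ‖ ≤ (⨆ g : ℝ, ‖X g‖) *
      ((μ F).toReal
        + ∑ j, ‖∫ f in N j, h f ∂μ‖
        + ∑ j, 2 * Real.pi * m * ‖∫ f in N j, ((f - fj j : ℝ) : ℂ) * h f ∂μ‖
        + ∑ j, (2 * Real.pi * m) ^ 2 / 2 * ∫ f in N j, (f - fj j) ^ 2 ∂μ) :=
  lemma_taylor_split_general m k x X hX μ h hmeas hunit hsupp fj N hNmeas hdisj F hF
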